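/- The hyperoctahedral group W_l of signed permutations of ℝ^l (linear transformations preserving the set {±e_1,...,±e_l}) is generated by the elements r̄_1,...,r̄_{l−1}, where r̄_i sends e_i ↦ −e_{i+1}, e_{i+1} ↦ e_i, and fixes all other basis vectors. -/

import Mathlib

/-- `T` acts on `ℝ^l` as the generator `r̄_i` (0-based index `i`): `e_i ↦ -e_{i+1}`,
`e_{i+1} ↦ e_i`, and all other standard basis vectors fixed. -/
def IsSignedGen (l i : ℕ) (h : i + 1 < l) (T : GL (Fin l) ℝ) : Prop :=
  (T : Matrix (Fin l) (Fin l) ℝ).mulVec (Pi.single (⟨i, by omega⟩ : Fin l) 1)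
      = -(Pi.single (⟨i + 1, h⟩ : Fin l) 1) ∧
  (T : Matrix (Fin l) (Fin l) ℝ).mulVec (Pi.single (⟨i + 1, h⟩ : Fin l) 1)
      = Pi.single (⟨i, by omega⟩ : Fin l) 1 ∧
  ∀ j : Fin l, (j : ℕ) ≠ i → (j : ℕ) ≠ i + 1 →
    (T : Matrix (Fin l) (Fin l) ℝ).mulVec (Pi.single j 1) = Pi.single j 1

/-!
A signed permutation is a pair `(ε, σ)` in the wreath product `(n → ℤˣ) ⋊ Perm n`, acting by
`e_j ↦ ε (σ j) • e_{σ j}`. These are exactly the linear maps preserving `{±e_j}`, and the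
determinant becomes the character `sign σ * ∏ ε`. The subgroup `G` generated by the abstract `r̄_i`
lies in its kernel. Conversely, `G` maps onto `Perm n` because the `r̄_i` map to the adjacent
transpositions, and `G` contains every sign vector `ν` with `∏ ν = 1`, because `r̄_i ^ 2` flips
the signs at `i` and `i + 1` and these flips generate all such vectors. So for `x` in the kernel,
pick `g ∈ G` with the same permutation as `x`; then `g⁻¹ * x` is such a sign vector and `x ∈ G`.
-/

open Equiv Matrix Pointwise SemidirectProduct

theorem Subgroup.mem_of_prod_eq_one_of_adjacent_mem {M : Type*} [CommGroup M] {m : ℕ}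
    (D : Subgroup (Fin (m + 1) → M))
    (hD : ∀ (i : Fin m) (c : M), (Pi.mulSingle i.castSucc c)⁻¹ * Pi.mulSingle i.succ c ∈ D)
    {f : Fin (m + 1) → M} (hf : ∏ j, f j = 1) : f ∈ D := by
  have hzero : ∀ j c, (Pi.mulSingle 0 c)⁻¹ * Pi.mulSingle j c ∈ D := by
    intro j c
    induction j using Fin.induction with
    | zero => simp
    | succ i ih => simpa [mul_assoc] using D.mul_mem ih (hD i c)
  -- `∏ f = 1` lets us move every `f j` to position `0` and back, one adjacent step at a time.
  have hsplit : f = ∏ j, (MonoidHom.mulSingle _ 0 (f j))⁻¹ * Pi.mulSingle j (f j) := by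
    rw [Finset.prod_mul_distrib, Finset.univ_prod_mulSingle, Finset.prod_inv_distrib, ← map_prod,
      hf, map_one, inv_one, one_mul]
  rw [hsplit]
  exact D.prod_mem fun j _ => hzero j (f j)

theorem Equiv.Perm.mulAutArrow_apply {n M : Type*} [Monoid M] (σ : Perm n) (ε : n → M) :
    mulAutArrow σ ε = ε ∘ σ.symm :=
  rfl

theorem Equiv.Perm.mulAutArrow_mulSingle {n M : Type*} [DecidableEq n] [Monoid M] (σ : Perm n)
    (j : n) (u : M) : mulAutArrow σ (Pi.mulSingle j u) = Pi.mulSingle (σ j) u := by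
  rw [Perm.mulAutArrow_apply, Pi.mulSingle_comp_equiv, symm_symm]

abbrev SignedPerm (n : Type*) := (n → ℤˣ) ⋊[mulAutArrow] Perm n

namespace SignedPerm

section Sign

variable {n : Type*} [Fintype n] [DecidableEq n]

def sign : SignedPerm n →* ℤˣ where
  toFun x := Perm.sign x.right * ∏ j, x.left j
  map_one' := by simp
  map_mul' x y := by
    simp only [mul_left, mul_right, map_mul, Pi.mul_apply, Finset.prod_mul_distrib,
      Perm.mulAutArrow_apply, Function.comp_apply, Equiv.prod_comp]
    ac_rfl

theorem sign_inl (ε : n → ℤˣ) : sign (inl ε : SignedPerm n) = ∏ j, ε j := by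
  simp [sign]

end Sign

section AdjacentGenerators

variable {m : ℕ}

def adjGen (i : Fin m) : SignedPerm (Fin (m + 1)) :=
  ⟨Pi.mulSingle i.succ (-1), swap i.castSucc i.succ⟩

theorem sign_adjGen (i : Fin m) : sign (adjGen i) = 1 := by
  simp [sign, adjGen, Perm.sign_swap Fin.castSucc_lt_succ.ne]

theorem adjGen_sq (i : Fin m) :
    adjGen i ^ 2 = inl ((Pi.mulSingle i.castSucc (-1))⁻¹ * Pi.mulSingle i.succ (-1)) := by
  ext1
  · simp [adjGen, sq, Perm.mulAutArrow_mulSingle, ← Pi.mulSingle_inv, mul_comm]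
  · simp [adjGen, sq]

theorem map_rightHom_closure_range_adjGen :
    (Subgroup.closure (Set.range (adjGen (m := m)))).map rightHom = ⊤ := by
  rw [eq_top_iff, ← Subgroup.closure_eq_top_of_mclosure_eq_top (Perm.mclosure_swap_castSucc_succ m),
    Subgroup.closure_le]
  rintro _ ⟨i, rfl⟩
  exact ⟨adjGen i, Subgroup.subset_closure ⟨i, rfl⟩, rfl⟩

theorem inl_mem_closure_range_adjGen {ν : Fin (m + 1) → ℤˣ} (hν : ∏ j, ν j = 1) :
    inl ν ∈ Subgroup.closure (Set.range (adjGen (m := m))) := by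
  set G := Subgroup.closure (Set.range (adjGen (m := m)))
  refine Subgroup.mem_of_prod_eq_one_of_adjacent_mem (G.comap inl) (fun i c => ?_) hν
  rcases Int.units_eq_one_or c with rfl | rfl
  · simp
  · rw [Subgroup.mem_comap, ← adjGen_sq]
    exact G.pow_mem (Subgroup.subset_closure (Set.mem_range_self i)) 2

theorem closure_range_adjGen : Subgroup.closure (Set.range (adjGen (m := m))) = sign.ker := by
  set G := Subgroup.closure (Set.range (adjGen (m := m)))
  have hle : G ≤ sign.ker := (Subgroup.closure_le _).2 (Set.range_subset_iff.2 sign_adjGen)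
  refine le_antisymm hle fun x hx => ?_
  obtain ⟨g, hg, hgx⟩ : ∃ g ∈ G, g.right = x.right := by
    simpa using map_rightHom_closure_range_adjGen.ge (Subgroup.mem_top x.right)
  have hν : g⁻¹ * x = inl (g⁻¹ * x).left := by
    ext <;> simp [hgx]
  have hνG : inl (g⁻¹ * x).left ∈ G := by
    apply inl_mem_closure_range_adjGen
    rw [← sign_inl, ← hν]
    exact sign.ker.mul_mem (sign.ker.inv_mem (hle hg)) hx
  rw [← mul_inv_cancel_left g x, hν]
  exact G.mul_mem hg hνG

end AdjacentGenerators

section Matrix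

variable {n : Type*} [Fintype n] [DecidableEq n] (R : Type*) [CommRing R]

def toMatrix (x : SignedPerm n) : Matrix n n R :=
  diagonal (fun i => ((x.left i : ℤ) : R)) * x.right⁻¹.permMatrix R

variable {R}

theorem toMatrix_mulVec_single (x : SignedPerm n) (j : n) (c : R) :
    toMatrix R x *ᵥ Pi.single j c = Pi.single (x.right j) ((x.left (x.right j) : ℤ) * c) := by
  rw [toMatrix, ← mulVec_mulVec, permMatrix_mulVec, Pi.single_comp_equiv, diagonal_mulVec_single]
  rfl

variable (R)

def toGL : SignedPerm n →* GL n R :=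
  MonoidHom.toHomUnits
    { toFun := toMatrix R
      map_one' := by simp [toMatrix]
      map_mul' := fun x y => ext_of_mulVec_single fun j => by
        simp only [← mulVec_mulVec, toMatrix_mulVec_single]
        simp [Perm.mulAutArrow_apply] }

variable {R}

@[simp]
theorem coe_toGL (x : SignedPerm n) : (toGL R x : Matrix n n R) = toMatrix R x :=
  rfl

theorem det_toMatrix (x : SignedPerm n) : (toMatrix R x).det = ((sign x : ℤ) : R) := by
  simp [toMatrix, sign, det_diagonal, mul_comm]

theorem det_toMatrix_eq_one_iff [CharZero R] (x : SignedPerm n) :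
    (toMatrix R x).det = 1 ↔ x ∈ sign.ker := by
  rw [det_toMatrix, MonoidHom.mem_ker, Units.ext_iff, Units.val_one]
  norm_cast

end Matrix

end SignedPerm

open SignedPerm

def signedBasis (n R : Type*) [DecidableEq n] [Ring R] : Set (n → R) :=
  {v | ∃ j : n, v = Pi.single j 1 ∨ v = -(Pi.single j 1)}

theorem mem_signedBasis {n R : Type*} [DecidableEq n] [Ring R] {v : n → R} :
    v ∈ signedBasis n R ↔ ∃ j : n, ∃ u : ℤˣ, v = Pi.single j ((u : ℤ) : R) := by
  refine exists_congr fun j => ⟨?_, ?_⟩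
  · rintro (rfl | rfl)
    exacts [⟨1, by simp⟩, ⟨-1, by simp [Pi.single_neg]⟩]
  · rintro ⟨u, rfl⟩
    rcases Int.units_eq_one_or u with rfl | rfl <;> simp [Pi.single_neg]

section Stabilizer

variable {n R : Type*} [Fintype n] [DecidableEq n] [CommRing R]

theorem toGL_smul_signedBasis_subset (x : SignedPerm n) :
    toGL R x • signedBasis n R ⊆ signedBasis n R := by
  rintro _ ⟨v, hv, rfl⟩
  obtain ⟨j, u, rfl⟩ := mem_signedBasis.1 hv
  refine mem_signedBasis.2 ⟨x.right j, x.left (x.right j) * u, ?_⟩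
  change toMatrix R x *ᵥ _ = _
  rw [toMatrix_mulVec_single]
  push_cast
  rfl

theorem mem_range_toGL_of_smul_eq [Nontrivial R] {T : GL n R}
    (hT : T • signedBasis n R = signedBasis n R) : T ∈ (toGL R).range := by
  have hcol : ∀ j, ∃ k, ∃ u : ℤˣ,
      T • (Pi.single j 1 : n → R) = (Pi.single k ((u : ℤ) : R) : n → R) := by
    intro j
    rw [← mem_signedBasis, ← hT]
    exact Set.smul_mem_smul_set (mem_signedBasis.2 ⟨j, 1, by simp⟩)
  choose f u hfu using hcol
  -- Rescaling by `u j` sends each `e_j` to `e_{f j}`, so injectivity of `T` forces `f` injective.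
  have hf : Function.Injective f := by
    intro a b hab
    have hunit : ∀ j, T • (Pi.single j ((u j : ℤ) : R) : n → R) = Pi.single (f j) 1 := fun j => by
      rw [← mul_one ((u j : ℤ) : R), ← smul_eq_mul, Pi.single_smul', smul_comm, hfu,
        ← Pi.single_smul', smul_eq_mul, ← Int.cast_mul, ← Units.val_mul, Int.units_mul_self]
      simp
    have hab' := congrFun (MulAction.injective T ((hunit a).trans (hab ▸ (hunit b).symm))) a
    by_contra hne
    rcases Int.units_eq_one_or (u a) with h | h <;> simp [h, hne] at hab'
  let σ := Equiv.ofBijective f (Finite.injective_iff_bijective.1 hf)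
  refine ⟨⟨u ∘ σ.symm, σ⟩, Units.ext (ext_of_mulVec_single fun j => ?_)⟩
  rw [coe_toGL, toMatrix_mulVec_single]
  change _ = T • (Pi.single j 1 : n → R)
  rw [hfu]
  simp [σ]

theorem range_toGL [Nontrivial R] :
    (toGL R).range = MulAction.stabilizer (GL n R) (signedBasis n R) := by
  refine le_antisymm ?_ fun T hT => mem_range_toGL_of_smul_eq hT
  rintro _ ⟨x, rfl⟩
  refine (toGL_smul_signedBasis_subset x).antisymm ?_
  rw [Set.subset_smul_set_iff, ← map_inv]
  exact toGL_smul_signedBasis_subset x⁻¹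

end Stabilizer

theorem eq_toGL_adjGen_of_isSignedGen {m : ℕ} {r : GL (Fin (m + 1)) ℝ} (i : Fin m)
    (h : IsSignedGen (m + 1) i (Nat.succ_lt_succ i.isLt) r) : r = toGL ℝ (adjGen i) := by
  have hc : (r : Matrix _ _ ℝ) *ᵥ Pi.single i.castSucc 1 = -Pi.single i.succ 1 := h.1
  have hs : (r : Matrix _ _ ℝ) *ᵥ Pi.single i.succ 1 = Pi.single i.castSucc 1 := h.2.1
  have hne : i.castSucc ≠ i.succ := Fin.castSucc_lt_succ.ne
  refine Units.ext (ext_of_mulVec_single fun j => ?_)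
  rw [coe_toGL, toMatrix_mulVec_single, adjGen]
  dsimp only
  rcases eq_or_ne j i.castSucc with rfl | hjc
  · rw [swap_apply_left, Pi.mulSingle_eq_same]
    simpa [Pi.single_neg] using hc
  rcases eq_or_ne j i.succ with rfl | hjs
  · rw [swap_apply_right, Pi.mulSingle_eq_of_ne hne]
    simpa using hs
  · rw [swap_apply_of_ne_of_ne hjc hjs, Pi.mulSingle_eq_of_ne hjs]
    simpa using h.2.2 j (fun h => hjc (Fin.ext h)) (fun h => hjs (Fin.ext h))

/-- The subgroup of `GL(l,ℝ)` generated by the elements `r̄_1, ..., r̄_{l-1}` is exactly the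
set of signed permutations (linear maps preserving `{±e_1,...,±e_l}`) of determinant `1`. -/
theorem signedGens_generate (l : ℕ) (rbar : Fin (l - 1) → GL (Fin l) ℝ)
    (hr : ∀ i : Fin (l - 1), IsSignedGen l i (by have := i.isLt; omega) (rbar i)) :
    ∀ T : GL (Fin l) ℝ,
      T ∈ Subgroup.closure (Set.range rbar) ↔
        ((Matrix.mulVec (T : Matrix (Fin l) (Fin l) ℝ)) ''
            {v | ∃ j : Fin l, v = Pi.single j 1 ∨ v = -(Pi.single j 1)} =
          {v | ∃ j : Fin l, v = Pi.single j 1 ∨ v = -(Pi.single j 1)} ∧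
        (T : Matrix (Fin l) (Fin l) ℝ).det = 1) := by
  intro T
  obtain _ | m := l
  · simp [Subsingleton.elim T 1]
  have hrbar : rbar = toGL ℝ ∘ adjGen := funext fun i => eq_toGL_adjGen_of_isSignedGen i (hr i)
  change _ ↔ T ∈ MulAction.stabilizer _ (signedBasis (Fin (m + 1)) ℝ) ∧ _
  rw [hrbar, Set.range_comp, ← MonoidHom.map_closure, closure_range_adjGen, Subgroup.mem_map,
    ← range_toGL]
  constructor
  · rintro ⟨x, hx, rfl⟩
    exact ⟨⟨x, rfl⟩, (det_toMatrix_eq_one_iff x).2 hx⟩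
  · rintro ⟨⟨x, rfl⟩, hdet⟩
    exact ⟨x, (det_toMatrix_eq_one_iff x).1 hdet, rfl⟩
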